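/- For every integer n ≥ 3, there exist at least (n+1)!/2 + n + 1 Einstein solutions for SU(n+1)/Tⁿ that are pairwise non-proportional (no one is a positive scalar multiple of another); namely, the (n+1)!/2 distinct Kähler–Einstein tuples λ_{ij} = |σ(i) − σ(j)| for permutations σ of {1, …, n+1}, together with the n+1 tuples λ_{ij} = n/(n+2) if t ∈ {i,j} and λ_{ij} = 1 otherwise, for t ∈ {1, …, n+1}. -/

import Mathlib

open Finset

/-- Pairs `i < j` in `{1, …, n+1}` (modeled as `Fin (n+1)`), indexing the
positive roots / isotropy summands of the full flag manifold `SU(n+1)/Tⁿ`. -/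
abbrev FlagIdx (n : ℕ) := {p : Fin (n + 1) × Fin (n + 1) // p.1 < p.2}

/-- Symmetric extension `λ_{ji} := λ_{ij}` of a family indexed by pairs `i < j`.
(The diagonal value is irrelevant; we set it to `1`.) -/
def symExt (n : ℕ) (lam : FlagIdx n → ℝ) (i j : Fin (n + 1)) : ℝ :=
  if h : i < j then lam ⟨(i, j), h⟩
  else if h : j < i then lam ⟨(j, i), h⟩
  else 1

/-- Sakane's formula for the component `r_{ij}` of the Ricci tensor of the
invariant metric determined by `lam` on `SU(n+1)/Tⁿ`. -/
noncomputable def ricci (n : ℕ) (lam : FlagIdx n → ℝ) (i j : Fin (n + 1)) : ℝ :=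
  1 / (2 * symExt n lam i j) + (1 / (4 * ((n : ℝ) + 1))) *
    ∑ k ∈ univ.filter (fun k : Fin (n + 1) => k ≠ i ∧ k ≠ j),
      (symExt n lam i j / (symExt n lam i k * symExt n lam k j)
        - symExt n lam i k / (symExt n lam i j * symExt n lam k j)
        - symExt n lam j k / (symExt n lam i j * symExt n lam i k))

/-- `lam` is an Einstein solution with Einstein constant `k`:
`r_{ij}(lam) = k` for all `1 ≤ i < j ≤ n+1`. -/
def IsEinstein (n : ℕ) (lam : FlagIdx n → ℝ) (k : ℝ) : Prop :=
  ∀ i j : Fin (n + 1), i < j → ricci n lam i j = k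

/-- Scalar curvature `S(λ) = 2 Σ_{i<j} r_{ij}(λ)`. -/
noncomputable def scalarCurv (n : ℕ) (lam : FlagIdx n → ℝ) : ℝ :=
  2 * ∑ p : FlagIdx n, ricci n lam p.1.1 p.1.2

/-- Volume `V(λ) = Π_{i<j} λ_{ij}²`. -/
noncomputable def vol (n : ℕ) (lam : FlagIdx n → ℝ) : ℝ :=
  ∏ p : FlagIdx n, (lam p) ^ 2

/-- Scale invariant `H(λ) = V(λ)^{1/d} · S(λ)`, where `d = n(n+1)`. -/
noncomputable def scaleInv (n : ℕ) (lam : FlagIdx n → ℝ) : ℝ :=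
  vol n lam ^ ((1 : ℝ) / ((n : ℝ) * ((n : ℝ) + 1))) * scalarCurv n lam

/-- The Kähler–Einstein tuple `λ_{ij} = |σ(i) − σ(j)|` associated to a
permutation `σ` (i.e. to an order of the root system). -/
noncomputable def kahlerFam (n : ℕ) (σ : Equiv.Perm (Fin (n + 1))) : FlagIdx n → ℝ :=
  fun p => |((σ p.1.1 : ℕ) : ℝ) - ((σ p.1.2 : ℕ) : ℝ)|

/-- The family `λ_{ij} = n/(n+2)` if `t ∈ {i, j}`, and `λ_{ij} = 1` otherwise. -/
noncomputable def tFam (n : ℕ) (t : Fin (n + 1)) : FlagIdx n → ℝ :=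
  fun p => if p.1.1 = t ∨ p.1.2 = t then (n : ℝ) / ((n : ℝ) + 2) else 1

/-- Two families are proportional if one is a positive scalar multiple of the other. -/
def Proportional (n : ℕ) (f g : FlagIdx n → ℝ) : Prop :=
  ∃ c : ℝ, 0 < c ∧ ∀ p, f p = c * g p

lemma symExt_kahler (n : ℕ) (σ : Equiv.Perm (Fin (n+1))) {i j : Fin (n+1)} (h : i ≠ j) :
    symExt n (kahlerFam n σ) i j = |((σ i : ℕ) : ℝ) - ((σ j : ℕ) : ℝ)| := by
  rcases lt_or_gt_of_ne h with h' | h'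
  · rw [symExt, dif_pos h']; rfl
  · rw [symExt, dif_neg (by exact fun hh => absurd hh (not_lt_of_gt h')), dif_pos h']
    simp [kahlerFam, abs_sub_comm]

lemma symExt_tFam (n : ℕ) (t : Fin (n+1)) {i j : Fin (n+1)} (h : i ≠ j) :
    symExt n (tFam n t) i j = if i = t ∨ j = t then (n : ℝ) / ((n : ℝ) + 2) else 1 := by
  rcases lt_or_gt_of_ne h with h' | h'
  · rw [symExt, dif_pos h']; rfl
  · rw [symExt, dif_neg (by exact fun hh => absurd hh (not_lt_of_gt h')), dif_pos h']
    simp [tFam, or_comm]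

lemma card_filter_ne (n : ℕ) {i j : Fin (n+1)} (h : i ≠ j) :
    (univ.filter fun k : Fin (n+1) => k ≠ i ∧ k ≠ j).card = n - 1 := by
  have heq : (univ.filter fun k : Fin (n+1) => k ≠ i ∧ k ≠ j) = univ \ {i, j} := by
    ext k; simp
  rw [heq, Finset.card_sdiff_of_subset (by simp), Finset.card_univ]
  rw [Finset.card_pair h]
  simp

lemma card_between (n : ℕ) (σ : Equiv.Perm (Fin (n+1))) {a b : ℕ} (hb : b ≤ n+1) :
    (univ.filter fun k : Fin (n+1) => a < (σ k : ℕ) ∧ (σ k : ℕ) < b).card = b - a - 1 := by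
  rw [← Nat.card_Ioo]
  apply Finset.card_nbij (fun k => ((σ k : ℕ)))
  · intro k hk; simp only [Finset.mem_coe, mem_filter, mem_univ, true_and] at hk
    simp [Finset.mem_Ioo, hk.1, hk.2]
  · intro k hk l hl hkl
    exact σ.injective (Fin.val_injective hkl)
  · intro m hm
    simp only [Finset.coe_Ioo, Set.mem_Ioo] at hm
    refine ⟨σ.symm ⟨m, by omega⟩, ?_, by simp⟩
    simp [hm.1, hm.2]

private lemma habs {u v : ℝ} (h : u < v) : |u - v| = v - u := by
  rw [abs_sub_comm]; exact abs_of_pos (by linarith)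

private lemma habs' {u v : ℝ} (h : v < u) : |u - v| = u - v :=
  abs_of_pos (by linarith)

lemma term_mid {x y z : ℝ} (h : (x < z ∧ z < y) ∨ (y < z ∧ z < x)) :
    |x-y| / (|x-z| * |z-y|) - |x-z| / (|x-y| * |z-y|) - |y-z| / (|x-y| * |x-z|)
      = 2 / |x-y| := by
  rcases h with ⟨h1, h2⟩ | ⟨h1, h2⟩
  · rw [habs (by linarith : x < y), habs h1, habs h2, habs' h2]
    have e1 : y - x ≠ 0 := by linarith
    have e2 : z - x ≠ 0 := by linarith
    have e3 : y - z ≠ 0 := by linarith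
    field_simp; ring
  · rw [habs' (by linarith : y < x), habs' h2, habs' h1, habs h1]
    have e1 : x - y ≠ 0 := by linarith
    have e2 : x - z ≠ 0 := by linarith
    have e3 : z - y ≠ 0 := by linarith
    field_simp; ring

lemma term_out {x y z : ℝ} (hxy : x ≠ y)
    (h : (z < x ∧ z < y) ∨ (x < z ∧ y < z)) :
    |x-y| / (|x-z| * |z-y|) - |x-z| / (|x-y| * |z-y|) - |y-z| / (|x-y| * |x-z|)
      = -2 / |x-y| := by
  rcases h with ⟨h1, h2⟩ | ⟨h1, h2⟩ <;> rcases lt_or_gt_of_ne hxy with hxy' | hxy'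
  · rw [habs hxy', habs' h1, habs h2, habs' h2]
    have e1 : y - x ≠ 0 := by linarith
    have e2 : x - z ≠ 0 := by linarith
    have e3 : y - z ≠ 0 := by linarith
    field_simp; ring
  · rw [habs' hxy', habs' h1, habs h2, habs' h2]
    have e1 : x - y ≠ 0 := by linarith
    have e2 : x - z ≠ 0 := by linarith
    have e3 : y - z ≠ 0 := by linarith
    field_simp; ring
  · rw [habs hxy', habs h1, habs' h2, habs h2]
    have e1 : y - x ≠ 0 := by linarith
    have e2 : z - x ≠ 0 := by linarith
    have e3 : z - y ≠ 0 := by linarith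
    field_simp; ring
  · rw [habs' hxy', habs h1, habs' h2, habs h2]
    have e1 : x - y ≠ 0 := by linarith
    have e2 : z - x ≠ 0 := by linarith
    have e3 : z - y ≠ 0 := by linarith
    field_simp; ring

lemma term_midN {p q r : ℕ} (h : (p < r ∧ r < q) ∨ (q < r ∧ r < p)) :
    |(p:ℝ)-(q:ℝ)| / (|(p:ℝ)-(r:ℝ)| * |(r:ℝ)-(q:ℝ)|)
      - |(p:ℝ)-(r:ℝ)| / (|(p:ℝ)-(q:ℝ)| * |(r:ℝ)-(q:ℝ)|)
      - |(q:ℝ)-(r:ℝ)| / (|(p:ℝ)-(q:ℝ)| * |(p:ℝ)-(r:ℝ)|)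
      = 2 / |(p:ℝ)-(q:ℝ)| := by
  apply term_mid
  rcases h with ⟨h1, h2⟩ | ⟨h1, h2⟩
  · exact Or.inl ⟨by exact_mod_cast h1, by exact_mod_cast h2⟩
  · exact Or.inr ⟨by exact_mod_cast h1, by exact_mod_cast h2⟩

lemma term_outN {p q r : ℕ} (hpq : p ≠ q) (h : (r < p ∧ r < q) ∨ (p < r ∧ q < r)) :
    |(p:ℝ)-(q:ℝ)| / (|(p:ℝ)-(r:ℝ)| * |(r:ℝ)-(q:ℝ)|)
      - |(p:ℝ)-(r:ℝ)| / (|(p:ℝ)-(q:ℝ)| * |(r:ℝ)-(q:ℝ)|)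
      - |(q:ℝ)-(r:ℝ)| / (|(p:ℝ)-(q:ℝ)| * |(p:ℝ)-(r:ℝ)|)
      = -2 / |(p:ℝ)-(q:ℝ)| := by
  apply term_out (by exact_mod_cast hpq)
  rcases h with ⟨h1, h2⟩ | ⟨h1, h2⟩
  · exact Or.inl ⟨by exact_mod_cast h1, by exact_mod_cast h2⟩
  · exact Or.inr ⟨by exact_mod_cast h1, by exact_mod_cast h2⟩

lemma abs_cast_sub (a b : ℕ) :
    |(a:ℝ) - (b:ℝ)| = ((max a b - min a b : ℕ) : ℝ) := by
  rcases le_total a b with h | h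
  · rw [abs_sub_comm, abs_of_nonneg (sub_nonneg.2 (Nat.cast_le.2 h) : (0:ℝ) ≤ (b:ℝ) - a),
      max_eq_right h, min_eq_left h, Nat.cast_sub h]
  · rw [abs_of_nonneg (sub_nonneg.2 (Nat.cast_le.2 h) : (0:ℝ) ≤ (a:ℝ) - b),
      max_eq_left h, min_eq_right h, Nat.cast_sub h]

lemma kahler_einstein (n : ℕ) (σ : Equiv.Perm (Fin (n+1))) :
    IsEinstein n (kahlerFam n σ) (1/((n:ℝ)+1)) := by
  intro i j hij
  have hne : i ≠ j := ne_of_lt hij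
  have hσne : (σ i : ℕ) ≠ (σ j : ℕ) :=
    fun h => hne (σ.injective (Fin.val_injective h))
  set a := min (σ i : ℕ) (σ j : ℕ) with ha
  set b := max (σ i : ℕ) (σ j : ℕ) with hb
  have hcases : (a = (σ i : ℕ) ∧ b = (σ j : ℕ)) ∨ (a = (σ j : ℕ) ∧ b = (σ i : ℕ)) := by
    rcases le_total (σ i : ℕ) (σ j : ℕ) with h | h
    · exact Or.inl ⟨min_eq_left h, max_eq_right h⟩
    · exact Or.inr ⟨min_eq_right h, max_eq_left h⟩
  have hab : a < b := by rcases hcases with ⟨h1, h2⟩ | ⟨h1, h2⟩ <;> omega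
  have hbn : b ≤ n := by
    have h1 := (σ i).isLt
    have h2 := (σ j).isLt
    rcases hcases with ⟨_, h⟩ | ⟨_, h⟩ <;> omega
  set m := b - a with hm
  have hm1 : 1 ≤ m := by omega
  have hmn : m ≤ n := by omega
  have hd : |((σ i : ℕ):ℝ) - ((σ j : ℕ):ℝ)| = (m : ℝ) := by
    rw [abs_cast_sub, ← ha, ← hb, ← hm]
  have hterm : ∀ k ∈ univ.filter (fun k : Fin (n + 1) => k ≠ i ∧ k ≠ j),
      (symExt n (kahlerFam n σ) i j / (symExt n (kahlerFam n σ) i k * symExt n (kahlerFam n σ) k j)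
        - symExt n (kahlerFam n σ) i k / (symExt n (kahlerFam n σ) i j * symExt n (kahlerFam n σ) k j)
        - symExt n (kahlerFam n σ) j k / (symExt n (kahlerFam n σ) i j * symExt n (kahlerFam n σ) i k))
      = (if a < (σ k : ℕ) ∧ (σ k : ℕ) < b then 2/(m:ℝ) else -2/(m:ℝ)) := by
    intro k hk
    simp only [mem_filter, mem_univ, true_and] at hk
    obtain ⟨hki, hkj⟩ := hk
    have hkiN : (σ k : ℕ) ≠ (σ i : ℕ) := fun h => hki (σ.injective (Fin.val_injective h))
    have hkjN : (σ k : ℕ) ≠ (σ j : ℕ) := fun h => hkj (σ.injective (Fin.val_injective h))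
    rw [symExt_kahler n σ hne, symExt_kahler n σ (Ne.symm hki),
      symExt_kahler n σ hkj, symExt_kahler n σ (fun h => hkj (h.symm)) ]
    split_ifs with hPk
    · rw [← hd]
      apply term_midN
      rcases hcases with ⟨h1, h2⟩ | ⟨h1, h2⟩
      · exact Or.inl ⟨by omega, by omega⟩
      · exact Or.inr ⟨by omega, by omega⟩
    · rw [← hd]
      apply term_outN hσne
      rcases hcases with ⟨h1, h2⟩ | ⟨h1, h2⟩
      · rcases (by omega : (σ k : ℕ) < a ∨ b < (σ k : ℕ)) with h | h
        · exact Or.inl ⟨by omega, by omega⟩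
        · exact Or.inr ⟨by omega, by omega⟩
      · rcases (by omega : (σ k : ℕ) < a ∨ b < (σ k : ℕ)) with h | h
        · exact Or.inl ⟨by omega, by omega⟩
        · exact Or.inr ⟨by omega, by omega⟩
  have c1 : ((univ.filter (fun k : Fin (n + 1) => k ≠ i ∧ k ≠ j)).filter
      (fun k => a < (σ k : ℕ) ∧ (σ k : ℕ) < b)).card = m - 1 := by
    have heq : (univ.filter (fun k : Fin (n + 1) => k ≠ i ∧ k ≠ j)).filter
        (fun k => a < (σ k : ℕ) ∧ (σ k : ℕ) < b)
        = univ.filter (fun k : Fin (n+1) => a < (σ k : ℕ) ∧ (σ k : ℕ) < b) := by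
      ext k
      simp only [mem_filter, mem_univ, true_and]
      constructor
      · rintro ⟨_, h⟩; exact h
      · intro h
        refine ⟨⟨?_, ?_⟩, h⟩
        · rintro rfl; rcases hcases with ⟨h1, h2⟩ | ⟨h1, h2⟩ <;> omega
        · rintro rfl; rcases hcases with ⟨h1, h2⟩ | ⟨h1, h2⟩ <;> omega
    rw [heq, card_between n σ (by omega)]
  have c2 : ((univ.filter (fun k : Fin (n + 1) => k ≠ i ∧ k ≠ j)).filter
      (fun k => ¬(a < (σ k : ℕ) ∧ (σ k : ℕ) < b))).card = n - m := by
    have := Finset.card_filter_add_card_filter_not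
      (s := univ.filter (fun k : Fin (n + 1) => k ≠ i ∧ k ≠ j))
      (fun k : Fin (n+1) => a < (σ k : ℕ) ∧ (σ k : ℕ) < b)
    rw [card_filter_ne n hne, c1] at this
    omega
  rw [ricci, Finset.sum_congr rfl hterm, Finset.sum_ite, Finset.sum_const, Finset.sum_const,
    c1, c2, symExt_kahler n σ hne, hd]
  have hmr : ((m:ℝ)) ≠ 0 := Nat.cast_ne_zero.2 (by omega)
  have hn1 : (n:ℝ) + 1 ≠ 0 := by positivity
  rw [nsmul_eq_mul, nsmul_eq_mul, Nat.cast_sub hm1, Nat.cast_sub hmn]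
  push_cast
  field_simp
  ring

lemma tFam_einstein (n : ℕ) (hn : 3 ≤ n) (t : Fin (n+1)) :
    IsEinstein n (tFam n t)
      (((n:ℝ)+2)*((n:ℝ)^2+(n:ℝ)+2)/(4*(n:ℝ)^2*((n:ℝ)+1))) := by
  have hn3 : (3:ℝ) ≤ (n:ℝ) := by exact_mod_cast hn
  have hn0 : (n:ℝ) ≠ 0 := ne_of_gt (by linarith)
  have hn1 : (n:ℝ) + 1 ≠ 0 := ne_of_gt (by linarith)
  have hn2 : (n:ℝ) + 2 ≠ 0 := ne_of_gt (by linarith)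
  set c : ℝ := (n:ℝ)/((n:ℝ)+2) with hcdef
  have hc0 : c ≠ 0 := by rw [hcdef]; positivity
  intro i j hij
  have hne : i ≠ j := ne_of_lt hij
  by_cases hcase : i = t ∨ j = t
  · have hterm : ∀ k ∈ univ.filter (fun k : Fin (n + 1) => k ≠ i ∧ k ≠ j),
        (symExt n (tFam n t) i j / (symExt n (tFam n t) i k * symExt n (tFam n t) k j)
          - symExt n (tFam n t) i k / (symExt n (tFam n t) i j * symExt n (tFam n t) k j)
          - symExt n (tFam n t) j k / (symExt n (tFam n t) i j * symExt n (tFam n t) i k))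
        = -(1/(c*c)) := by
      intro k hk
      simp only [mem_filter, mem_univ, true_and] at hk
      obtain ⟨hki, hkj⟩ := hk
      rw [symExt_tFam n t hne, symExt_tFam n t (Ne.symm hki),
        symExt_tFam n t hkj, symExt_tFam n t (fun h => hkj h.symm)]
      rcases hcase with rfl | rfl
      · rw [if_pos (Or.inl rfl), if_pos (Or.inl rfl),
          if_neg (by rintro (h | h); exact hki h; exact hne h.symm),
          if_neg (by rintro (h | h); exact hne h.symm; exact hki h)]
        rw [mul_one, div_self hc0]; ring
      · rw [if_pos (Or.inr rfl : i = j ∨ j = j),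
          if_neg (by rintro (h | h); exact hne h; exact hkj h : ¬(i = j ∨ k = j)),
          if_pos (Or.inr rfl : k = j ∨ j = j),
          if_pos (Or.inl rfl : j = j ∨ k = j)]
        rw [one_mul, mul_one, div_self hc0]; ring
    rw [ricci, Finset.sum_congr rfl hterm, Finset.sum_const, card_filter_ne n hne,
      symExt_tFam n t hne, if_pos hcase, nsmul_eq_mul, Nat.cast_sub (by omega : 1 ≤ n)]
    rw [hcdef]
    field_simp
    ring
  · push_neg at hcase
    obtain ⟨hit, hjt⟩ := hcase
    have htS : t ∈ univ.filter (fun k : Fin (n + 1) => k ≠ i ∧ k ≠ j) := by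
      simp [Ne.symm hit, Ne.symm hjt]
    have hrest : ∀ k ∈ (univ.filter (fun k : Fin (n + 1) => k ≠ i ∧ k ≠ j)).erase t,
        (symExt n (tFam n t) i j / (symExt n (tFam n t) i k * symExt n (tFam n t) k j)
          - symExt n (tFam n t) i k / (symExt n (tFam n t) i j * symExt n (tFam n t) k j)
          - symExt n (tFam n t) j k / (symExt n (tFam n t) i j * symExt n (tFam n t) i k))
        = -1 := by
      intro k hk
      simp only [Finset.mem_erase, mem_filter, mem_univ, true_and] at hk
      obtain ⟨hkt, hki, hkj⟩ := hk
      rw [symExt_tFam n t hne, symExt_tFam n t (Ne.symm hki),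
        symExt_tFam n t hkj, symExt_tFam n t (fun h => hkj h.symm)]
      rw [if_neg (by rintro (h | h); exact hit h; exact hjt h),
        if_neg (by rintro (h | h); exact hit h; exact hkt h),
        if_neg (by rintro (h | h); exact hkt h; exact hjt h),
        if_neg (by rintro (h | h); exact hjt h; exact hkt h)]
      norm_num
    have hcard : ((univ.filter (fun k : Fin (n + 1) => k ≠ i ∧ k ≠ j)).erase t).card = n - 2 := by
      rw [Finset.card_erase_of_mem htS, card_filter_ne n hne]
      omega
    rw [ricci, ← Finset.add_sum_erase _ _ htS, Finset.sum_congr rfl hrest,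
      Finset.sum_const, hcard, nsmul_eq_mul, Nat.cast_sub (by omega : 2 ≤ n),
      symExt_tFam n t hne, if_neg (by rintro (h | h); exact hit h; exact hjt h),
      symExt_tFam n t hit, if_pos (Or.inr rfl),
      symExt_tFam n t (Ne.symm hjt), if_pos (Or.inl rfl),
      symExt_tFam n t hjt, if_pos (Or.inr rfl)]
    field_simp
    ring

lemma prop_symm {n : ℕ} {f g : FlagIdx n → ℝ} (h : Proportional n f g) :
    Proportional n g f := by
  obtain ⟨c, hc, h⟩ := h
  exact ⟨c⁻¹, by positivity, fun p => by rw [h p]; field_simp⟩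

lemma mkPair {n : ℕ} (i j : Fin (n+1)) (h : i ≠ j) :
    ∃ p : FlagIdx n, (p.1.1 = i ∧ p.1.2 = j) ∨ (p.1.1 = j ∧ p.1.2 = i) := by
  rcases lt_or_gt_of_ne h with h' | h'
  · exact ⟨⟨(i, j), h'⟩, Or.inl ⟨rfl, rfl⟩⟩
  · exact ⟨⟨(j, i), h'⟩, Or.inr ⟨rfl, rfl⟩⟩

lemma kahler_le (n : ℕ) (σ : Equiv.Perm (Fin (n+1))) (p : FlagIdx n) :
    kahlerFam n σ p ≤ (n : ℝ) := by
  rw [kahlerFam, abs_cast_sub]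
  have h1 := (σ p.1.1).isLt
  have h2 := (σ p.1.2).isLt
  exact_mod_cast (by omega :
    (max (σ p.1.1 : ℕ) (σ p.1.2 : ℕ) - min (σ p.1.1 : ℕ) (σ p.1.2 : ℕ)) ≤ n)

lemma kahler_exists (n : ℕ) (σ : Equiv.Perm (Fin (n+1))) (v : ℕ) (h1 : 1 ≤ v)
    (h2 : v ≤ n) : ∃ p : FlagIdx n, kahlerFam n σ p = (v : ℝ) := by
  set i := σ.symm ⟨0, by omega⟩ with hi
  set j := σ.symm ⟨v, by omega⟩ with hj
  have hij : i ≠ j := by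
    rw [hi, hj]
    intro h
    have := σ.symm.injective h
    simp only [Fin.mk.injEq] at this
    omega
  obtain ⟨p, hp⟩ := mkPair i j hij
  refine ⟨p, ?_⟩
  rcases hp with ⟨e1, e2⟩ | ⟨e1, e2⟩ <;> rw [kahlerFam, e1, e2, hi, hj] <;>
    simp [abs_of_nonneg, abs_sub_comm]

lemma tFam_mem (n : ℕ) (t : Fin (n+1)) (p : FlagIdx n) :
    tFam n t p = (n:ℝ)/((n:ℝ)+2) ∨ tFam n t p = 1 := by
  rw [tFam]; split_ifs <;> [left; right] <;> rfl

lemma tFam_le_one (n : ℕ) (t : Fin (n+1)) (p : FlagIdx n) : tFam n t p ≤ 1 := by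
  rcases tFam_mem n t p with h | h
  · rw [h, div_le_one (by positivity)]
    linarith [Nat.cast_nonneg (α := ℝ) n]
  · rw [h]

lemma kahler_not_prop_kahler (n : ℕ) (hn : 1 ≤ n) (σ τ : Equiv.Perm (Fin (n+1)))
    (hne : kahlerFam n σ ≠ kahlerFam n τ) :
    ¬ Proportional n (kahlerFam n σ) (kahlerFam n τ) := by
  rintro ⟨c, hc, h⟩
  have hn0 : (0:ℝ) < n := by exact_mod_cast hn
  obtain ⟨p, hp⟩ := kahler_exists n τ n hn (le_refl n)
  obtain ⟨q, hq⟩ := kahler_exists n σ n hn (le_refl n)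
  have h1 : c ≤ 1 := by
    have := h p
    rw [hp] at this
    have h2 := kahler_le n σ p
    rw [this] at h2
    nlinarith
  have h2 : 1 ≤ c := by
    have := h q
    rw [hq] at this
    have h3 := kahler_le n τ q
    nlinarith
  have : c = 1 := le_antisymm h1 h2
  subst this
  exact hne (funext fun p => by rw [h p, one_mul])

lemma kahler_not_prop_tFam (n : ℕ) (hn : 3 ≤ n) (σ : Equiv.Perm (Fin (n+1)))
    (t : Fin (n+1)) : ¬ Proportional n (kahlerFam n σ) (tFam n t) := by
  rintro ⟨c, hc, h⟩
  have hn3 : (3:ℝ) ≤ (n:ℝ) := by exact_mod_cast hn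
  obtain ⟨p1, hp1⟩ := kahler_exists n σ 1 (by omega) (by omega)
  obtain ⟨p2, hp2⟩ := kahler_exists n σ 2 (by omega) (by omega)
  obtain ⟨p3, hp3⟩ := kahler_exists n σ n (by omega) (le_refl n)
  have key : ∀ a b : FlagIdx n, tFam n t a = tFam n t b →
      kahlerFam n σ a = kahlerFam n σ b := fun a b hab => by rw [h a, h b, hab]
  rcases tFam_mem n t p1 with h1 | h1 <;> rcases tFam_mem n t p2 with h2 | h2 <;>
    rcases tFam_mem n t p3 with h3 | h3
  all_goals first
  | (have e := key p1 p2 (h1.trans h2.symm); rw [hp1, hp2] at e; norm_num at e)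
  | (have e := key p1 p3 (h1.trans h3.symm); rw [hp1, hp3] at e; push_cast at e; linarith)
  | (have e := key p2 p3 (h2.trans h3.symm); rw [hp2, hp3] at e; push_cast at e; linarith)

lemma exists_third (n : ℕ) (hn : 3 ≤ n) (t s : Fin (n+1)) :
    ∃ u : Fin (n+1), u ≠ t ∧ u ≠ s := by
  have hcard : (univ \ ({t, s} : Finset (Fin (n+1)))).Nonempty := by
    apply Finset.card_pos.1
    rw [Finset.card_sdiff_of_subset (Finset.subset_univ _), Finset.card_univ, Fintype.card_fin]
    have h1 : ({t, s} : Finset (Fin (n+1))).card ≤ 2 := Finset.card_insert_le t {s}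
    omega
  obtain ⟨u, hu⟩ := hcard
  simp only [Finset.mem_sdiff, Finset.mem_univ, true_and, Finset.mem_insert,
    Finset.mem_singleton, not_or] at hu
  exact ⟨u, hu.1, hu.2⟩

lemma tFam_vals (n : ℕ) (t s : Fin (n+1)) (hts : t ≠ s) (u : Fin (n+1))
    (hut : u ≠ t) (hus : u ≠ s) :
    ∃ p : FlagIdx n, tFam n t p = (n:ℝ)/((n:ℝ)+2) ∧ tFam n s p = 1 := by
  obtain ⟨p, hp⟩ := mkPair t u (Ne.symm hut)
  refine ⟨p, ?_, ?_⟩ <;> rw [tFam] <;> rcases hp with ⟨e1, e2⟩ | ⟨e1, e2⟩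
  · rw [if_pos (Or.inl e1)]
  · rw [if_pos (Or.inr e2)]
  · rw [if_neg (by rw [e1, e2]; rintro (h | h); exact hts h; exact hus h)]
  · rw [if_neg (by rw [e1, e2]; rintro (h | h); exact hus h; exact hts h)]

lemma tFam_not_prop_tFam (n : ℕ) (hn : 3 ≤ n) (t s : Fin (n+1)) (hts : t ≠ s) :
    ¬ Proportional n (tFam n t) (tFam n s) := by
  rintro ⟨c, hc, h⟩
  have hn3 : (3:ℝ) ≤ (n:ℝ) := by exact_mod_cast hn
  obtain ⟨u, hut, hus⟩ := exists_third n hn t s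
  obtain ⟨p, hpt, hps⟩ := tFam_vals n t s hts u hut hus
  obtain ⟨q, hqs, hqt⟩ := tFam_vals n s t (Ne.symm hts) u hus hut
  have e1 : (n:ℝ)/((n:ℝ)+2) = c := by have := h p; rw [hpt, hps, mul_one] at this; exact this
  have e2 : (1:ℝ) = c * ((n:ℝ)/((n:ℝ)+2)) := by have := h q; rw [hqt, hqs] at this; exact this
  rw [← e1] at e2
  have hlt : (n:ℝ)/((n:ℝ)+2) < 1 := by rw [div_lt_one (by linarith)]; linarith
  have hpos : (0:ℝ) < (n:ℝ)/((n:ℝ)+2) := by positivity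
  nlinarith

lemma tFam_injective (n : ℕ) (hn : 3 ≤ n) : Function.Injective (tFam n) := by
  intro t s h
  by_contra hts
  have hn3 : (3:ℝ) ≤ (n:ℝ) := by exact_mod_cast hn
  obtain ⟨u, hut, hus⟩ := exists_third n hn t s
  obtain ⟨p, hpt, hps⟩ := tFam_vals n t s hts u hut hus
  rw [h, hps] at hpt
  have : (n:ℝ)/((n:ℝ)+2) < 1 := by rw [div_lt_one (by linarith)]; linarith
  linarith [hpt]

lemma kahler_ne_tFam (n : ℕ) (hn : 3 ≤ n) (σ : Equiv.Perm (Fin (n+1)))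
    (t : Fin (n+1)) : kahlerFam n σ ≠ tFam n t := by
  intro h
  obtain ⟨p, hp⟩ := kahler_exists n σ 2 (by omega) (by omega)
  have := tFam_le_one n t p
  rw [← h, hp] at this
  norm_num at this

lemma kahler_eq_cases (n : ℕ) (σ τ : Equiv.Perm (Fin (n+1)))
    (h : kahlerFam n σ = kahlerFam n τ) :
    τ = σ ∨ τ = σ.trans Fin.revPerm := by
  -- distances agree in ℕ
  have hN : ∀ k l : Fin (n+1),
      max (τ k : ℕ) (τ l : ℕ) - min (τ k : ℕ) (τ l : ℕ)
        = max (σ k : ℕ) (σ l : ℕ) - min (σ k : ℕ) (σ l : ℕ) := by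
    intro k l
    rcases lt_trichotomy k l with hkl | hkl | hkl
    · have := congrFun h ⟨(k, l), hkl⟩
      rw [kahlerFam, kahlerFam] at this
      simp only at this
      rw [abs_cast_sub, abs_cast_sub] at this
      exact_mod_cast this.symm
    · rw [hkl]; omega
    · have := congrFun h ⟨(l, k), hkl⟩
      rw [kahlerFam, kahlerFam] at this
      simp only at this
      rw [abs_cast_sub, abs_cast_sub] at this
      have := this.symm
      rw [max_comm, min_comm, max_comm (σ l : ℕ), min_comm (σ l : ℕ)] at this
      exact_mod_cast this
  set ρ := σ.symm.trans τ with hρdef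
  have hρ : ∀ a b : Fin (n+1),
      max (ρ a : ℕ) (ρ b : ℕ) - min (ρ a : ℕ) (ρ b : ℕ)
        = max (a : ℕ) (b : ℕ) - min (a : ℕ) (b : ℕ) := by
    intro a b
    have := hN (σ.symm a) (σ.symm b)
    simpa [hρdef] using this
  have hτρ : ∀ k, τ k = ρ (σ k) := by
    intro k; simp [hρdef]
  set z0 : Fin (n+1) := ⟨0, by omega⟩ with hz0
  set zn : Fin (n+1) := ⟨n, by omega⟩ with hzn
  have hends := hρ z0 zn
  have hb0 : (ρ z0 : ℕ) ≤ n := by have := (ρ z0).isLt; omega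
  have hbn : (ρ zn : ℕ) ≤ n := by have := (ρ zn).isLt; omega
  simp only [hz0, hzn] at hends
  have hcases : (ρ z0 : ℕ) = 0 ∨ (ρ z0 : ℕ) = n := by
    simp only [hz0, hzn] at hb0 hbn ⊢
    omega
  rcases hcases with hz | hz
  · left
    apply Equiv.ext
    intro k
    rw [hτρ k]
    set a := σ k with ha
    have h1 := hρ a z0
    have h2 : (ρ a : ℕ) ≤ n := by have := (ρ a).isLt; omega
    have h3 : (a : ℕ) ≤ n := by have := a.isLt; omega
    simp only [hz0] at h1
    rw [hz] at h1
    exact (Fin.ext (by omega)).symm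
  · right
    apply Equiv.ext
    intro k
    rw [hτρ k]
    set a := σ k with ha
    have h1 := hρ a z0
    have h2 : (ρ a : ℕ) ≤ n := by have := (ρ a).isLt; omega
    have h3 : (a : ℕ) ≤ n := by have := a.isLt; omega
    simp only [hz0] at h1
    rw [hz] at h1
    have : (Equiv.trans σ Fin.revPerm) k = a.rev := by simp [ha]
    rw [this]
    apply Fin.ext
    rw [Fin.val_rev]
    omega

lemma fiber_card_le (n : ℕ) (f : FlagIdx n → ℝ) :
    ((univ : Finset (Equiv.Perm (Fin (n+1)))).filter
      (fun σ => kahlerFam n σ = f)).card ≤ 2 := by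
  rcases ((univ : Finset (Equiv.Perm (Fin (n+1)))).filter
      (fun σ => kahlerFam n σ = f)).eq_empty_or_nonempty with he | ⟨σ₀, hσ₀⟩
  · rw [he]; simp
  · simp only [mem_filter, mem_univ, true_and] at hσ₀
    have hsub : (univ : Finset (Equiv.Perm (Fin (n+1)))).filter
        (fun σ => kahlerFam n σ = f) ⊆ {σ₀, σ₀.trans Fin.revPerm} := by
      intro τ hτ
      simp only [mem_filter, mem_univ, true_and] at hτ
      have := kahler_eq_cases n σ₀ τ (hσ₀.trans hτ.symm)
      simp only [Finset.mem_insert, Finset.mem_singleton]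
      exact this
    calc _ ≤ ({σ₀, σ₀.trans Fin.revPerm} : Finset _).card := Finset.card_le_card hsub
    _ ≤ 2 := Finset.card_insert_le _ _ |>.trans (by simp)

lemma kahler_image_card (n : ℕ) :
    Nat.factorial (n+1) / 2 ≤
      ((univ : Finset (Equiv.Perm (Fin (n+1)))).image (kahlerFam n)).card := by
  have h := Finset.card_le_mul_card_image (f := kahlerFam n)
    (univ : Finset (Equiv.Perm (Fin (n+1)))) 2 (fun f _ => fiber_card_le n f)
  rw [Finset.card_univ, Fintype.card_perm, Fintype.card_fin] at h
  omega

/-- For every `n ≥ 3`, there are at least `(n+1)!/2 + n + 1`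
pairwise non-proportional Einstein solutions for `SU(n+1)/Tⁿ`: the
Kähler–Einstein tuples together with the `n+1` tuples `tFam n t`. -/
theorem many_einstein (n : ℕ) (hn : 3 ≤ n) (E : Set (FlagIdx n → ℝ))
    (hE : E = {f | ∃ σ : Equiv.Perm (Fin (n + 1)), f = kahlerFam n σ} ∪
              {f | ∃ t : Fin (n + 1), f = tFam n t}) :
    (∀ f ∈ E, ∃ k : ℝ, IsEinstein n f k) ∧
    (∀ f ∈ E, ∀ g ∈ E, f ≠ g → ¬ Proportional n f g) ∧
    Nat.factorial (n + 1) / 2 + n + 1 ≤ E.ncard := by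
  subst hE
  refine ⟨?_, ?_, ?_⟩
  · rintro f (⟨σ, rfl⟩ | ⟨t, rfl⟩)
    · exact ⟨_, kahler_einstein n σ⟩
    · exact ⟨_, tFam_einstein n hn t⟩
  · rintro f (⟨σ, rfl⟩ | ⟨t, rfl⟩) g (⟨τ, rfl⟩ | ⟨s, rfl⟩) hne
    · exact kahler_not_prop_kahler n (by omega) σ τ hne
    · exact kahler_not_prop_tFam n hn σ s
    · exact fun hp => kahler_not_prop_tFam n hn τ t (prop_symm hp)
    · exact tFam_not_prop_tFam n hn t s (fun h => hne (by rw [h]))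
  · have hA : {f : FlagIdx n → ℝ | ∃ σ : Equiv.Perm (Fin (n + 1)), f = kahlerFam n σ}
        = ↑((univ : Finset (Equiv.Perm (Fin (n+1)))).image (kahlerFam n)) := by
      ext f; simp [eq_comm]
    have hB : {f : FlagIdx n → ℝ | ∃ t : Fin (n + 1), f = tFam n t}
        = ↑((univ : Finset (Fin (n+1))).image (tFam n)) := by
      ext f; simp [eq_comm]
    rw [hA, hB]
    rw [Set.ncard_union_eq ?hdisj (Set.finite_coe_iff.mp ?h1 ) ?h2]
    case hdisj =>
      rw [Set.disjoint_left]
      rintro f hf hg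
      simp only [Finset.coe_image, Set.mem_image, Finset.coe_univ, Set.mem_univ] at hf hg
      obtain ⟨σ, _, rfl⟩ := hf
      obtain ⟨t, _, ht⟩ := hg
      exact kahler_ne_tFam n hn σ t ht.symm
    case h1 => exact Set.finite_coe_iff.mpr (Finset.finite_toSet _)
    case h2 => exact Finset.finite_toSet _
    rw [Set.ncard_coe_finset, Set.ncard_coe_finset]
    have hBcard : ((univ : Finset (Fin (n+1))).image (tFam n)).card = n + 1 := by
      rw [Finset.card_image_of_injective _ (tFam_injective n hn), Finset.card_univ,
        Fintype.card_fin]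
    have hAcard := kahler_image_card n
    omega
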